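/- Let n ≥ 1, F ∈ B_c, t > 0 and u_n(x) = ∫_ℝ F(x−ξ) Θ_t^{(n)}(ξ) dξ. Then u_n(x) → 0 as |x| → ∞. Consequently, if n ≥ 2 the improper integral of u_n over ℝ vanishes: lim_{α→−∞, β→+∞} ∫_α^β u_n(x) dx = 0. -/

import Mathlib

open MeasureTheory Filter Topology

/-- The Gauss–Weierstrass heat kernel `Θ_t(x) = (4πt)^(−1/2) exp(−x²/(4t))` for `t > 0`. -/
noncomputable def heatK (t x : ℝ) : ℝ :=
  (Real.sqrt (4 * Real.pi * t))⁻¹ * Real.exp (-x ^ 2 / (4 * t))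

/-- `F ∈ B_c`: continuous, vanishing at `−∞`, with a finite limit at `+∞`. -/
def memBc (F : ℝ → ℝ) : Prop :=
  Continuous F ∧ Tendsto F atBot (nhds (0 : ℝ)) ∧ ∃ L : ℝ, Tendsto F atTop (nhds L)

/-!
The derivatives of the heat kernel are polynomials times the Gaussian `exp (-x²/(4t))`, so they are
integrable, vanish at `±∞` and have Gaussian majorants. Hence for `n ≥ 1` the integral of
`Θ_t^{(n)}` over `ℝ` is zero, being the difference of the limits of `Θ_t^{(n-1)}` at `±∞`. As `F`
is bounded, dominated convergence sends `u_n(x)` to `L · ∫ Θ_t^{(n)} = 0` as `x → +∞` and to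
`0 · ∫ Θ_t^{(n)} = 0` as `x → -∞`. Differentiating under the integral sign gives `u_{n-1}' = u_n`,
so for `n ≥ 2` we get `∫_α^β u_n = u_{n-1}(β) - u_{n-1}(α) → 0`.
-/

open Real
open scoped Polynomial

theorem Continuous.exists_abs_le_of_tendsto_atBot_atTop {f : ℝ → ℝ} (hf : Continuous f)
    {a b : ℝ} (hbot : Tendsto f atBot (𝓝 a)) (htop : Tendsto f atTop (𝓝 b)) :
    ∃ M, ∀ x, |f x| ≤ M := by
  obtain ⟨M, hM⟩ := isBounded_iff_forall_norm_le.1 <|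
    hf.isBounded_range_iff_isBigO_atTop_atBot.2 ⟨htop.isBigO_one ℝ, hbot.isBigO_one ℝ⟩
  exact ⟨M, fun x => hM _ (Set.mem_range_self x)⟩

theorem hasDerivAt_eval_mul_exp_neg_sq_div (P : ℝ[X]) (c x : ℝ) :
    HasDerivAt (fun y => P.eval y * exp (-y ^ 2 / c))
      ((P.derivative - Polynomial.C (2 / c) * Polynomial.X * P).eval x * exp (-x ^ 2 / c)) x := by
  have hexp : HasDerivAt (fun y => -y ^ 2 / c) (-(2 * x) / c) x := by
    simpa using ((hasDerivAt_pow 2 x).neg).div_const c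
  refine ((P.hasDerivAt x).mul hexp.exp).congr_deriv ?_
  simp only [Polynomial.eval_sub, Polynomial.eval_mul, Polynomial.eval_C, Polynomial.eval_X]
  ring

section PolynomialGaussian

variable {c : ℝ}

theorem tendsto_eval_mul_exp_neg_sq_div_atTop (hc : 0 < c) (P : ℝ[X]) :
    Tendsto (fun x => P.eval x * exp (-x ^ 2 / c)) atTop (𝓝 0) := by
  have hP : Tendsto (fun x => P.eval x * exp (-x)) atTop (𝓝 0) := by
    simpa [div_eq_mul_inv, exp_neg] using P.tendsto_div_exp_atTop
  refine squeeze_zero_norm' ?_ (tendsto_zero_iff_norm_tendsto_zero.1 hP)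
  filter_upwards [eventually_ge_atTop c] with x hx
  rw [norm_mul, norm_mul, norm_of_nonneg (exp_pos _).le, norm_of_nonneg (exp_pos _).le]
  gcongr
  rw [neg_div, neg_le_neg_iff, le_div_iff₀ hc]
  nlinarith

theorem tendsto_eval_mul_exp_neg_sq_div_atBot (hc : 0 < c) (P : ℝ[X]) :
    Tendsto (fun x => P.eval x * exp (-x ^ 2 / c)) atBot (𝓝 0) := by
  refine ((tendsto_eval_mul_exp_neg_sq_div_atTop hc (P.comp (-Polynomial.X))).comp
    tendsto_neg_atBot_atTop).congr fun x => ?_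
  simp

theorem integrable_exp_neg_sq_div (hc : 0 < c) : Integrable fun x => exp (-x ^ 2 / c) := by
  simpa [neg_div, div_eq_inv_mul] using integrable_exp_neg_mul_sq (inv_pos.2 hc)

theorem exists_abs_eval_mul_exp_neg_sq_div_le (hc : 0 < c) (P : ℝ[X]) :
    ∃ C, ∀ x, |P.eval x * exp (-x ^ 2 / c)| ≤ C * exp (-x ^ 2 / (2 * c)) := by
  have h2c : 0 < 2 * c := by positivity
  obtain ⟨C, hC⟩ := (show Continuous fun x => P.eval x * exp (-x ^ 2 / (2 * c)) by fun_prop)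
    |>.exists_abs_le_of_tendsto_atBot_atTop (tendsto_eval_mul_exp_neg_sq_div_atBot h2c P)
      (tendsto_eval_mul_exp_neg_sq_div_atTop h2c P)
  refine ⟨C, fun x => ?_⟩
  have hsplit : exp (-x ^ 2 / c) = exp (-x ^ 2 / (2 * c)) * exp (-x ^ 2 / (2 * c)) := by
    rw [← exp_add]
    congr 1
    field_simp
    ring
  rw [hsplit, ← mul_assoc, abs_mul, abs_of_pos (exp_pos _)]
  gcongr
  exact hC x

theorem integrable_eval_mul_exp_neg_sq_div (hc : 0 < c) (P : ℝ[X]) :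
    Integrable fun x => P.eval x * exp (-x ^ 2 / c) := by
  obtain ⟨C, hC⟩ := exists_abs_eval_mul_exp_neg_sq_div_le hc P
  exact ((integrable_exp_neg_sq_div (by positivity)).const_mul C).mono'
    (by fun_prop : Continuous _).aestronglyMeasurable (ae_of_all _ hC)

theorem exp_neg_sub_sq_div_le (hc : 0 < c) (x η : ℝ) :
    exp (-(x - η) ^ 2 / c) ≤ exp (x ^ 2 / c) * exp (-η ^ 2 / (2 * c)) := by
  rw [← exp_add, exp_le_exp, ← sub_nonneg]
  have h : x ^ 2 / c + -η ^ 2 / (2 * c) - -(x - η) ^ 2 / c = (2 * x - η) ^ 2 / (2 * c) := by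
    field_simp
    ring
  rw [h]
  positivity

end PolynomialGaussian

section BoundedConvolution

variable {F K : ℝ → ℝ} {M : ℝ}

theorem tendsto_integral_comp_sub_mul {l : Filter ℝ} [l.IsCountablyGenerated] {L : ℝ}
    (hFm : Measurable F) (hFb : ∀ x, |F x| ≤ M) (hFl : ∀ ξ, Tendsto (fun x => F (x - ξ)) l (𝓝 L))
    (hK : Integrable K) :
    Tendsto (fun x => ∫ ξ, F (x - ξ) * K ξ) l (𝓝 (L * ∫ ξ, K ξ)) := by
  rw [← integral_const_mul]
  refine tendsto_integral_filter_of_dominated_convergence (fun ξ => M * |K ξ|)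
    (Eventually.of_forall fun x =>
      (hFm.comp (measurable_const.sub measurable_id)).aestronglyMeasurable.mul
        hK.aestronglyMeasurable)
    (Eventually.of_forall fun x => ae_of_all _ fun ξ => ?_) (hK.abs.const_mul M)
    (ae_of_all _ fun ξ => (hFl ξ).mul_const (K ξ))
  rw [norm_mul, norm_eq_abs, norm_eq_abs]
  exact mul_le_mul_of_nonneg_right (hFb _) (abs_nonneg _)

theorem integral_comp_sub_mul_eq (F G : ℝ → ℝ) (x : ℝ) :
    ∫ ξ, F (x - ξ) * G ξ = ∫ η, F η * G (x - η) := by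
  simpa using integral_sub_left_eq_self (fun η => F η * G (x - η)) volume x

theorem hasDerivAt_integral_comp_sub_mul {K' : ℝ → ℝ} {C c : ℝ} (hc : 0 < c)
    (hFm : Measurable F) (hFb : ∀ x, |F x| ≤ M) (hK : ∀ x, HasDerivAt K (K' x) x)
    (hKi : Integrable K) (hK'b : ∀ y, |K' y| ≤ C * exp (-y ^ 2 / c)) (x₀ : ℝ) :
    HasDerivAt (fun x => ∫ ξ, F (x - ξ) * K ξ) (∫ ξ, F (x₀ - ξ) * K' ξ) x₀ := by
  have hM : 0 ≤ M := (abs_nonneg _).trans (hFb 0)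
  have hC : 0 ≤ C := by simpa using (abs_nonneg _).trans (hK'b 0)
  have hKc : Continuous K := continuous_iff_continuousAt.2 fun x => (hK x).continuousAt
  have hK'm : Measurable K' := funext (fun x => (hK x).deriv) ▸ measurable_deriv K
  have hdom : ∀ η, ∀ x ∈ Metric.ball x₀ 1, ‖F η * K' (x - η)‖ ≤
      M * C * exp ((|x₀| + 1) ^ 2 / c) * exp (-η ^ 2 / (2 * c)) := by
    intro η x hx
    have hx_sq : x ^ 2 ≤ (|x₀| + 1) ^ 2 := by
      rw [Metric.mem_ball, dist_eq] at hx
      rw [← sq_abs x]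
      gcongr
      linarith [abs_sub_abs_le_abs_sub x x₀]
    calc ‖F η * K' (x - η)‖ ≤ M * (C * exp (-(x - η) ^ 2 / c)) := by
          rw [norm_mul, norm_eq_abs, norm_eq_abs]
          exact mul_le_mul (hFb η) (hK'b _) (abs_nonneg _) hM
      _ ≤ M * (C * (exp (x ^ 2 / c) * exp (-η ^ 2 / (2 * c)))) := by
          gcongr
          exact exp_neg_sub_sq_div_le hc x η
      _ ≤ M * (C * (exp ((|x₀| + 1) ^ 2 / c) * exp (-η ^ 2 / (2 * c)))) := by gcongr
      _ = _ := by ring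
  have key := hasDerivAt_integral_of_dominated_loc_of_deriv_le
    (F := fun x η => F η * K (x - η)) (F' := fun x η => F η * K' (x - η))
    (Metric.ball_mem_nhds x₀ one_pos)
    (Eventually.of_forall fun x => (hFm.mul (hKc.measurable.comp
      (measurable_const.sub measurable_id))).aestronglyMeasurable)
    ((hKi.comp_sub_left x₀).bdd_mul hFm.aestronglyMeasurable
      (ae_of_all _ fun η => (norm_eq_abs _).trans_le (hFb η)))
    (hFm.mul (hK'm.comp (measurable_const.sub measurable_id))).aestronglyMeasurable
    (ae_of_all _ hdom) ((integrable_exp_neg_sq_div (by positivity)).const_mul _)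
    (ae_of_all _ fun η x _ =>
      ((hK (x - η)).comp_sub_const x η).const_mul (F η))
  simp_rw [integral_comp_sub_mul_eq F]
  exact key.2

end BoundedConvolution

section HeatKernel

variable {t : ℝ}

theorem contDiff_heatK (t : ℝ) : ContDiff ℝ ⊤ (heatK t) := by
  unfold heatK
  fun_prop

theorem hasDerivAt_iteratedDeriv_heatK (t : ℝ) (n : ℕ) (x : ℝ) :
    HasDerivAt (iteratedDeriv n (heatK t)) (iteratedDeriv (n + 1) (heatK t) x) x := by
  rw [iteratedDeriv_succ]
  exact ((contDiff_heatK t).differentiable_iteratedDeriv n (by simp) x).hasDerivAt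

theorem exists_iteratedDeriv_heatK_eq (t : ℝ) (n : ℕ) :
    ∃ P : ℝ[X], iteratedDeriv n (heatK t) = fun x => P.eval x * exp (-x ^ 2 / (4 * t)) := by
  induction n with
  | zero => exact ⟨Polynomial.C (√(4 * π * t))⁻¹, funext fun x => by simp [heatK]⟩
  | succ n ih =>
    obtain ⟨P, hP⟩ := ih
    refine ⟨P.derivative - Polynomial.C (2 / (4 * t)) * Polynomial.X * P, funext fun x => ?_⟩
    rw [iteratedDeriv_succ, hP]
    exact (hasDerivAt_eval_mul_exp_neg_sq_div P _ x).deriv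

theorem tendsto_iteratedDeriv_heatK_atTop (ht : 0 < t) (n : ℕ) :
    Tendsto (iteratedDeriv n (heatK t)) atTop (𝓝 0) := by
  obtain ⟨P, hP⟩ := exists_iteratedDeriv_heatK_eq t n
  exact hP ▸ tendsto_eval_mul_exp_neg_sq_div_atTop (by positivity) P

theorem tendsto_iteratedDeriv_heatK_atBot (ht : 0 < t) (n : ℕ) :
    Tendsto (iteratedDeriv n (heatK t)) atBot (𝓝 0) := by
  obtain ⟨P, hP⟩ := exists_iteratedDeriv_heatK_eq t n
  exact hP ▸ tendsto_eval_mul_exp_neg_sq_div_atBot (by positivity) P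

theorem integrable_iteratedDeriv_heatK (ht : 0 < t) (n : ℕ) :
    Integrable (iteratedDeriv n (heatK t)) := by
  obtain ⟨P, hP⟩ := exists_iteratedDeriv_heatK_eq t n
  exact hP ▸ integrable_eval_mul_exp_neg_sq_div (by positivity) P

theorem exists_abs_iteratedDeriv_heatK_le (ht : 0 < t) (n : ℕ) :
    ∃ C, ∀ x, |iteratedDeriv n (heatK t) x| ≤ C * exp (-x ^ 2 / (2 * (4 * t))) := by
  obtain ⟨P, hP⟩ := exists_iteratedDeriv_heatK_eq t n
  exact hP ▸ exists_abs_eval_mul_exp_neg_sq_div_le (by positivity) P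

theorem integral_iteratedDeriv_succ_heatK (ht : 0 < t) (n : ℕ) :
    ∫ x, iteratedDeriv (n + 1) (heatK t) x = 0 := by
  rw [integral_of_hasDerivAt_of_tendsto (hasDerivAt_iteratedDeriv_heatK t n)
    (integrable_iteratedDeriv_heatK ht (n + 1)) (tendsto_iteratedDeriv_heatK_atBot ht n)
    (tendsto_iteratedDeriv_heatK_atTop ht n), sub_zero]

end HeatKernel

/-- The paper's `u_n = F⁽ⁿ⁾ ∗ Θ_t`, with the derivatives moved onto the kernel. -/
noncomputable def heatConv (F : ℝ → ℝ) (t : ℝ) (n : ℕ) (x : ℝ) : ℝ :=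
  ∫ ξ, F (x - ξ) * iteratedDeriv n (heatK t) ξ

section HeatConvolution

variable {F : ℝ → ℝ} {M L t : ℝ}

theorem tendsto_heatConv_succ_atTop (hFm : Measurable F) (hFb : ∀ x, |F x| ≤ M)
    (hF : Tendsto F atTop (𝓝 L)) (ht : 0 < t) (n : ℕ) :
    Tendsto (heatConv F t (n + 1)) atTop (𝓝 0) := by
  have h := tendsto_integral_comp_sub_mul hFm hFb
    (fun ξ => hF.comp (tendsto_atTop_add_const_right _ (-ξ) tendsto_id))
    (integrable_iteratedDeriv_heatK ht (n + 1))
  rwa [integral_iteratedDeriv_succ_heatK ht, mul_zero] at h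

theorem tendsto_heatConv_succ_atBot (hFm : Measurable F) (hFb : ∀ x, |F x| ≤ M)
    (hF : Tendsto F atBot (𝓝 L)) (ht : 0 < t) (n : ℕ) :
    Tendsto (heatConv F t (n + 1)) atBot (𝓝 0) := by
  have h := tendsto_integral_comp_sub_mul hFm hFb
    (fun ξ => hF.comp (tendsto_atBot_add_const_right _ (-ξ) tendsto_id))
    (integrable_iteratedDeriv_heatK ht (n + 1))
  rwa [integral_iteratedDeriv_succ_heatK ht, mul_zero] at h

theorem hasDerivAt_heatConv (hFm : Measurable F) (hFb : ∀ x, |F x| ≤ M) (ht : 0 < t) (n : ℕ)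
    (x : ℝ) : HasDerivAt (heatConv F t n) (heatConv F t (n + 1) x) x := by
  obtain ⟨C, hC⟩ := exists_abs_iteratedDeriv_heatK_le ht (n + 1)
  exact hasDerivAt_integral_comp_sub_mul (by positivity) hFm hFb
    (hasDerivAt_iteratedDeriv_heatK t n) (integrable_iteratedDeriv_heatK ht n) hC x

theorem tendsto_intervalIntegral_heatConv {L₁ L₂ : ℝ} (hFm : Measurable F)
    (hFb : ∀ x, |F x| ≤ M) (hbot : Tendsto F atBot (𝓝 L₁)) (htop : Tendsto F atTop (𝓝 L₂))
    (ht : 0 < t) (n : ℕ) :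
    Tendsto (fun p : ℝ × ℝ => ∫ x in p.1..p.2, heatConv F t (n + 2) x) (atBot ×ˢ atTop)
      (𝓝 0) := by
  have hderiv := hasDerivAt_heatConv hFm hFb ht (n + 1)
  have hcont : Continuous (heatConv F t (n + 2)) :=
    continuous_iff_continuousAt.2 fun x => (hasDerivAt_heatConv hFm hFb ht (n + 2) x).continuousAt
  have hlim := ((tendsto_heatConv_succ_atTop hFm hFb htop ht n).comp tendsto_snd).sub
    ((tendsto_heatConv_succ_atBot hFm hFb hbot ht n).comp tendsto_fst)
  rw [sub_zero] at hlim
  refine hlim.congr fun p => ?_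
  exact (intervalIntegral.integral_eq_sub_of_hasDerivAt (fun x _ => hderiv x)
    (hcont.intervalIntegrable _ _)).symm

end HeatConvolution

theorem memBc.exists_abs_le {F : ℝ → ℝ} (hF : memBc F) : ∃ M, ∀ x, |F x| ≤ M :=
  have ⟨hFc, hbot, _, htop⟩ := hF
  hFc.exists_abs_le_of_tendsto_atBot_atTop hbot htop

/-- `u_n(x) = ∫ F(x−ξ)Θ_t^{(n)}(ξ)dξ → 0` as `|x| → ∞`; consequently, if `n ≥ 2`
the improper integral of `u_n` over `ℝ` vanishes. -/
theorem stmt12 (n : ℕ) (hn : 1 ≤ n) (F : ℝ → ℝ) (hF : memBc F) (t : ℝ) (ht : 0 < t) :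
    Tendsto (fun x : ℝ => ∫ ξ : ℝ, F (x - ξ) * iteratedDeriv n (fun y : ℝ => heatK t y) ξ)
      atTop (nhds 0) ∧
    Tendsto (fun x : ℝ => ∫ ξ : ℝ, F (x - ξ) * iteratedDeriv n (fun y : ℝ => heatK t y) ξ)
      atBot (nhds 0) ∧
    (2 ≤ n →
      Tendsto (fun p : ℝ × ℝ => ∫ x in p.1..p.2,
          ∫ ξ : ℝ, F (x - ξ) * iteratedDeriv n (fun y : ℝ => heatK t y) ξ)
        (atBot ×ˢ atTop) (nhds 0)) := by
  obtain ⟨M, hFb⟩ := hF.exists_abs_le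
  obtain ⟨hFc, hbot, L, htop⟩ := hF
  obtain ⟨m, rfl⟩ : ∃ m, n = m + 1 := ⟨n - 1, by omega⟩
  refine ⟨tendsto_heatConv_succ_atTop hFc.measurable hFb htop ht m,
    tendsto_heatConv_succ_atBot hFc.measurable hFb hbot ht m, fun hm => ?_⟩
  obtain ⟨k, rfl⟩ : ∃ k, m = k + 1 := ⟨m - 1, by omega⟩
  exact tendsto_intervalIntegral_heatConv hFc.measurable hFb hbot htop ht k
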